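/- Let 0 < δ < 1, p ≥ 1, and let {Z_t} be i.i.d. nonnegative random variables with E Z_t = 1. Let a = (a_0, …, a_p) and ā = (ā_0, …, ā_p) be two nonnegative coefficient vectors each with coefficient sums Σ_{j=1}^p a_j ≤ 1−δ and Σ_{j=1}^p ā_j ≤ 1−δ. Let X_t² and X̄_t² denote the corresponding Volterra series solutions driven by the same innovations {Z_t}. Then E|X_t² − X̄_t²| ≤ C |ā − a| Σ_{k=1}^∞ k²(1−δ)^k for some constant C depending only on p, δ and max(a_0, ā_0). -/

import Mathlib

/-!
Restricted to lags `≤ p`, the `k`-th Volterra term is a finite sum over `g : Fin k → {1, …, p}`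
of a coefficient `a₀ ∏ a_{gᵢ}` times a product of innovations at `k` distinct times; by
independence each such product has mean one. Hence the `L¹` distance of the `k`-th terms is at
most `Σ_g |a₀ ∏ a_{gᵢ} - ā₀ ∏ ā_{gᵢ}|`, and expanding the difference of products one factor at a
time shows that this sum is `O(k |ā - a| (1-δ)^(k-1))`.
-/

open MeasureTheory Finset ProbabilityTheory

/-- The `k`-th order term of the Volterra series of a stationary ARCH process. -/
noncomputable def volterraTerm {Ω : Type*} [MeasurableSpace Ω]
    (a : ℕ → ℝ) (Z : ℤ → Ω → ℝ) (t : ℤ) (k : ℕ) (ω : Ω) : ℝ :=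
  ∑' g : Fin k → ℕ+,
    (a 0 * ∏ i : Fin k, a (g i)) *
      ∏ i : Fin k, Z (t - ∑ l ∈ Finset.Iic i, (g l : ℕ)) ω

/-- The Volterra series solution `X_t²` of a stationary ARCH process. -/
noncomputable def volterra {Ω : Type*} [MeasurableSpace Ω]
    (a : ℕ → ℝ) (Z : ℤ → Ω → ℝ) (t : ℤ) (ω : Ω) : ℝ :=
  ∑' k : ℕ, volterraTerm a Z t k ω

open scoped ENNReal

lemma Finset.sum_piFinset_fin_succ {α M : Type*} [AddCommMonoid M] (s : Finset α) (k : ℕ)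
    (F : (Fin (k + 1) → α) → M) :
    ∑ x ∈ Fintype.piFinset (fun _ : Fin (k + 1) => s), F x
      = ∑ y ∈ s, ∑ x ∈ Fintype.piFinset (fun _ : Fin k => s), F (Fin.cons y x) := by
  classical
  have := filter_piFinset_eq_map_consEquiv (fun _ : Fin (k + 1) => s) (fun _ => True)
  simp only [filter_true] at this
  rw [this, sum_map, sum_product]
  rfl

lemma abs_mul_sub_mul_le {a b x y : ℝ} (ha : 0 ≤ a) (hy : 0 ≤ y) :
    |a * x - b * y| ≤ a * |x - y| + |a - b| * y := by
  calc |a * x - b * y| = |a * (x - y) + (a - b) * y| := by ring_nf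
    _ ≤ |a * (x - y)| + |(a - b) * y| := abs_add_le _ _
    _ = a * |x - y| + |a - b| * y := by rw [abs_mul, abs_mul, abs_of_nonneg ha, abs_of_nonneg hy]

section Telescoping

variable {α : Type*} (s : Finset α) {f g : α → ℝ} {ε : ℝ}

lemma sum_piFinset_abs_prod_sub_prod_succ_le (hf : ∀ x ∈ s, 0 ≤ f x) (hg : ∀ x ∈ s, 0 ≤ g x)
    (hfε : ∑ x ∈ s, f x ≤ ε) (hgε : ∑ x ∈ s, g x ≤ ε) (k : ℕ) :
    ∑ x ∈ Fintype.piFinset (fun _ : Fin (k + 1) => s), |∏ i, f (x i) - ∏ i, g (x i)|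
      ≤ ε * ∑ x ∈ Fintype.piFinset (fun _ : Fin k => s), |∏ i, f (x i) - ∏ i, g (x i)|
        + (∑ x ∈ s, |f x - g x|) * ε ^ k := by
  have hg_pow : (∑ x ∈ s, g x) ^ k ≤ ε ^ k := pow_le_pow_left₀ (sum_nonneg hg) hgε k
  calc ∑ x ∈ Fintype.piFinset (fun _ : Fin (k + 1) => s), |∏ i, f (x i) - ∏ i, g (x i)|
      ≤ ∑ y ∈ s, ∑ x ∈ Fintype.piFinset (fun _ : Fin k => s),
          (f y * |∏ i, f (x i) - ∏ i, g (x i)| + |f y - g y| * ∏ i, g (x i)) := by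
        rw [sum_piFinset_fin_succ]
        refine sum_le_sum fun y hy => sum_le_sum fun x hx => ?_
        simp only [Fin.prod_univ_succ, Fin.cons_zero, Fin.cons_succ]
        exact abs_mul_sub_mul_le (hf y hy) (prod_nonneg fun i _ =>
          hg _ (Fintype.mem_piFinset.mp hx i))
    _ = (∑ y ∈ s, f y) * ∑ x ∈ Fintype.piFinset (fun _ : Fin k => s),
          |∏ i, f (x i) - ∏ i, g (x i)| + (∑ x ∈ s, |f x - g x|) * (∑ x ∈ s, g x) ^ k := by
        simp only [sum_add_distrib, ← mul_sum, ← sum_mul, sum_pow']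
    _ ≤ _ := by gcongr

lemma mul_sum_piFinset_abs_prod_sub_prod_le (hf : ∀ x ∈ s, 0 ≤ f x) (hg : ∀ x ∈ s, 0 ≤ g x)
    (hfε : ∑ x ∈ s, f x ≤ ε) (hgε : ∑ x ∈ s, g x ≤ ε) (k : ℕ) :
    ε * ∑ x ∈ Fintype.piFinset (fun _ : Fin k => s), |∏ i, f (x i) - ∏ i, g (x i)|
      ≤ k * (∑ x ∈ s, |f x - g x|) * ε ^ k := by
  have hε : 0 ≤ ε := (sum_nonneg hf).trans hfε
  induction k with
  | zero => simp
  | succ k ih =>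
    have step := sum_piFinset_abs_prod_sub_prod_succ_le s hf hg hfε hgε k
    calc ε * ∑ x ∈ Fintype.piFinset (fun _ : Fin (k + 1) => s), |∏ i, f (x i) - ∏ i, g (x i)|
        ≤ ε * (ε * ∑ x ∈ Fintype.piFinset (fun _ : Fin k => s), |∏ i, f (x i) - ∏ i, g (x i)|)
          + (∑ x ∈ s, |f x - g x|) * ε ^ (k + 1) := by
          rw [pow_succ]; nlinarith
      _ ≤ ε * (k * (∑ x ∈ s, |f x - g x|) * ε ^ k) + (∑ x ∈ s, |f x - g x|) * ε ^ (k + 1) := by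
          gcongr
      _ = (k + 1 : ℕ) * (∑ x ∈ s, |f x - g x|) * ε ^ (k + 1) := by
          push_cast; ring

end Telescoping

lemma summable_succ_sq_mul_pow_succ {ε : ℝ} (hε : 0 ≤ ε) (hε1 : ε < 1) :
    Summable fun k : ℕ => ((k : ℝ) + 1) ^ 2 * ε ^ (k + 1) := by
  have h := summable_pow_mul_geometric_of_norm_lt_one 2
    (by rwa [Real.norm_of_nonneg hε] : ‖ε‖ < 1)
  exact_mod_cast (summable_nat_add_iff 1).mpr h

section Series

variable {Ω E : Type*} [MeasurableSpace Ω] {μ : Measure Ω} [NormedAddCommGroup E]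

lemma tsum_lintegral_enorm_ne_top {F : ℕ → Ω → E} (hF : ∀ k, Integrable (F k) μ)
    (hs : Summable fun k => ∫ ω, ‖F k ω‖ ∂μ) : ∑' k, ∫⁻ ω, ‖F k ω‖ₑ ∂μ ≠ ∞ := by
  simp_rw [← ofReal_integral_norm_eq_lintegral_enorm (hF _),
    ← ENNReal.ofReal_tsum_of_nonneg (fun k => integral_nonneg fun ω => norm_nonneg _) hs]
  exact ENNReal.ofReal_ne_top

lemma ae_summable_norm_of_summable_integral_norm {F : ℕ → Ω → E} (hF : ∀ k, Integrable (F k) μ)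
    (hs : Summable fun k => ∫ ω, ‖F k ω‖ ∂μ) : ∀ᵐ ω ∂μ, Summable fun k => ‖F k ω‖ :=
  summable_norm_of_tsum_eLpNorm_ne_top le_rfl (fun k => (hF k).1) <| by
    simpa only [eLpNorm_one_eq_lintegral_enorm] using tsum_lintegral_enorm_ne_top hF hs

lemma integral_abs_tsum_sub_tsum_le {f g : ℕ → Ω → ℝ}
    (hf : ∀ k, Integrable (f k) μ) (hg : ∀ k, Integrable (g k) μ)
    (hfs : Summable fun k => ∫ ω, |f k ω| ∂μ) (hgs : Summable fun k => ∫ ω, |g k ω| ∂μ) :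
    ∫ ω, |∑' k, f k ω - ∑' k, g k ω| ∂μ ≤ ∑' k, ∫ ω, |f k ω - g k ω| ∂μ := by
  have hfg : ∀ k, Integrable (fun ω => f k ω - g k ω) μ := fun k => (hf k).sub (hg k)
  have hfgs : Summable fun k => ∫ ω, |f k ω - g k ω| ∂μ := by
    refine (hfs.add hgs).of_nonneg_of_le (fun k => integral_nonneg fun ω => abs_nonneg _)
      fun k => ?_
    rw [← integral_add (hf k).abs (hg k).abs]
    exact integral_mono (hfg k).abs ((hf k).abs.add (hg k).abs) fun ω => abs_sub _ _
  have hpt : ∀ᵐ ω ∂μ, ENNReal.ofReal |∑' k, f k ω - ∑' k, g k ω| ≤ ∑' k, ‖f k ω - g k ω‖ₑ := by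
    filter_upwards [ae_summable_norm_of_summable_integral_norm hf hfs,
      ae_summable_norm_of_summable_integral_norm hg hgs] with ω hfω hgω
    have hfgω : Summable fun k => |f k ω - g k ω| :=
      (hfω.add hgω).of_nonneg_of_le (fun k => abs_nonneg _) fun k => abs_sub _ _
    simp_rw [Real.enorm_eq_ofReal_abs,
      ← ENNReal.ofReal_tsum_of_nonneg (fun k => abs_nonneg _) hfgω,
      ← (Summable.of_norm hfω).tsum_sub (Summable.of_norm hgω)]
    refine ENNReal.ofReal_le_ofReal ?_
    simpa only [Real.norm_eq_abs] using
      norm_tsum_le_tsum_norm (f := fun k => f k ω - g k ω) (by simpa only [Real.norm_eq_abs])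
  by_cases hint : Integrable (fun ω => |∑' k, f k ω - ∑' k, g k ω|) μ
  · rw [integral_eq_lintegral_of_nonneg_ae (ae_of_all _ fun ω => abs_nonneg _) hint.1]
    refine ENNReal.toReal_le_of_le_ofReal
      (tsum_nonneg fun k => integral_nonneg fun ω => abs_nonneg _) ?_
    calc ∫⁻ ω, ENNReal.ofReal |∑' k, f k ω - ∑' k, g k ω| ∂μ
        ≤ ∫⁻ ω, ∑' k, ‖f k ω - g k ω‖ₑ ∂μ := lintegral_mono_ae hpt
      _ = ∑' k, ∫⁻ ω, ‖f k ω - g k ω‖ₑ ∂μ := lintegral_tsum fun k => (hfg k).1.enorm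
      _ = ENNReal.ofReal (∑' k, ∫ ω, |f k ω - g k ω| ∂μ) := by
          rw [ENNReal.ofReal_tsum_of_nonneg (fun k => integral_nonneg fun ω => abs_nonneg _) hfgs]
          congr 1 with k
          rw [← ofReal_integral_norm_eq_lintegral_enorm (hfg k)]
          rfl
  · rw [integral_undef hint]
    exact tsum_nonneg fun k => integral_nonneg fun ω => abs_nonneg _

end Series

def lagSet (p : ℕ) : Finset ℕ+ := (range p).image Nat.succPNat

lemma mem_lagSet {p : ℕ} {x : ℕ+} : x ∈ lagSet p ↔ (x : ℕ) ≤ p := by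
  rw [lagSet, mem_image]
  constructor
  · rintro ⟨i, hi, rfl⟩
    simpa using hi
  · intro hx
    refine ⟨x.natPred, ?_, x.succPNat_natPred⟩
    have := x.pos
    rw [mem_range, PNat.natPred]
    omega

lemma sum_lagSet {M : Type*} [AddCommMonoid M] (p : ℕ) (f : ℕ → M) :
    ∑ x ∈ lagSet p, f x = ∑ j ∈ Icc 1 p, f j := by
  rw [lagSet, sum_image fun i _ j _ h => Nat.succPNat_inj.mp h, range_eq_Ico]
  exact sum_Ico_add' f 0 p 1

structure ARCHInnovations {Ω : Type*} [MeasurableSpace Ω] (μ : Measure Ω) (Z : ℤ → Ω → ℝ) :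
    Prop where
  measurable : ∀ t, Measurable (Z t)
  nonneg : ∀ t ω, 0 ≤ Z t ω
  integral_eq_one : ∀ t, ∫ ω, Z t ω ∂μ = 1
  indep : iIndepFun Z μ

structure ARCHCoeffs (p : ℕ) (ε : ℝ) (a : ℕ → ℝ) : Prop where
  nonneg : ∀ j, 0 ≤ a j
  eq_zero_of_lt : ∀ j, p < j → a j = 0
  sum_le : ∑ j ∈ Icc 1 p, a j ≤ ε

def volterraCoeff (a : ℕ → ℝ) {k : ℕ} (g : Fin k → ℕ+) : ℝ := a 0 * ∏ i, a (g i)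

def volterraMonomial {Ω : Type*} (Z : ℤ → Ω → ℝ) (t : ℤ) {k : ℕ} (g : Fin k → ℕ+) (ω : Ω) : ℝ :=
  ∏ i : Fin k, Z (t - ∑ l ∈ Finset.Iic i, (g l : ℕ)) ω

section Volterra

variable {Ω : Type*} [MeasurableSpace Ω] {μ : Measure Ω} {Z : ℤ → Ω → ℝ} {p k : ℕ} {ε : ℝ}
  {a b : ℕ → ℝ}

lemma volterraTerm_eq_sum (hb : ∀ j, p < j → b j = 0) (t : ℤ) (k : ℕ) :
    volterraTerm b Z t k = fun ω =>
      ∑ g ∈ Fintype.piFinset (fun _ : Fin k => lagSet p),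
        volterraCoeff b g * volterraMonomial Z t g ω := by
  ext ω
  refine tsum_eq_sum fun g hg => ?_
  obtain ⟨i, hi⟩ : ∃ i, g i ∉ lagSet p := by simpa [Fintype.mem_piFinset] using hg
  rw [prod_eq_zero (mem_univ i) (hb _ (by simpa [mem_lagSet] using hi))]
  ring

lemma strictMono_sum_Iic (g : Fin k → ℕ+) : StrictMono fun i : Fin k => ∑ l ∈ Iic i, (g l : ℕ) :=
  fun i j hij => sum_lt_sum_of_subset (Iic_subset_Iic.mpr hij.le) (mem_Iic.mpr le_rfl)
    (by simpa using hij) (g j).pos fun _ _ _ => Nat.zero_le _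

lemma volterraMonomial_nonneg (hZ : ARCHInnovations μ Z) (t : ℤ) (g : Fin k → ℕ+) (ω : Ω) :
    0 ≤ volterraMonomial Z t g ω :=
  prod_nonneg fun _ _ => hZ.nonneg _ ω

lemma integral_volterraMonomial (hZ : ARCHInnovations μ Z) (t : ℤ) (g : Fin k → ℕ+) :
    ∫ ω, volterraMonomial Z t g ω ∂μ = 1 := by
  have hinj : Function.Injective fun i : Fin k => t - ∑ l ∈ Iic i, (g l : ℕ) :=
    fun i j h => (strictMono_sum_Iic g).injective (by exact_mod_cast sub_right_injective h)
  unfold volterraMonomial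
  rw [(hZ.indep.precomp hinj).integral_fun_prod_eq_prod_integral
    fun i => (hZ.measurable _).aestronglyMeasurable]
  simp [hZ.integral_eq_one]

lemma integrable_volterraMonomial (hZ : ARCHInnovations μ Z) (t : ℤ) (g : Fin k → ℕ+) :
    Integrable (volterraMonomial Z t g) μ :=
  Integrable.of_integral_ne_zero (by rw [integral_volterraMonomial hZ]; exact one_ne_zero)

lemma volterraTerm_nonneg (hZ : ARCHInnovations μ Z) (hb : ARCHCoeffs p ε b) (t : ℤ) (k : ℕ)
    (ω : Ω) : 0 ≤ volterraTerm b Z t k ω := by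
  rw [volterraTerm_eq_sum hb.eq_zero_of_lt]
  exact sum_nonneg fun g _ => mul_nonneg (mul_nonneg (hb.nonneg 0) (prod_nonneg fun i _ =>
    hb.nonneg _)) (volterraMonomial_nonneg hZ t g ω)

lemma integrable_volterraTerm (hZ : ARCHInnovations μ Z) (hb : ∀ j, p < j → b j = 0) (t : ℤ)
    (k : ℕ) : Integrable (volterraTerm b Z t k) μ := by
  rw [volterraTerm_eq_sum hb]
  exact integrable_finsetSum _ fun g _ => (integrable_volterraMonomial hZ t g).const_mul _

lemma integral_volterraTerm (hZ : ARCHInnovations μ Z) (hb : ∀ j, p < j → b j = 0) (t : ℤ)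
    (k : ℕ) : ∫ ω, volterraTerm b Z t k ω ∂μ = b 0 * (∑ j ∈ Icc 1 p, b j) ^ k := by
  rw [volterraTerm_eq_sum hb, integral_finsetSum _ fun g _ =>
    (integrable_volterraMonomial hZ t g).const_mul _]
  simp only [integral_const_mul, integral_volterraMonomial hZ, mul_one, volterraCoeff, ← mul_sum]
  rw [← sum_pow' (lagSet p) fun x => b x, sum_lagSet]

lemma summable_integral_abs_volterraTerm (hZ : ARCHInnovations μ Z) (hb : ARCHCoeffs p ε b)
    (hε : ε < 1) (t : ℤ) : Summable fun k => ∫ ω, |volterraTerm b Z t k ω| ∂μ := by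
  have hs : 0 ≤ ∑ j ∈ Icc 1 p, b j := sum_nonneg fun j _ => hb.nonneg j
  refine ((summable_geometric_of_lt_one hs (hb.sum_le.trans_lt hε)).mul_left (b 0)).congr
    fun k => ?_
  simp_rw [abs_of_nonneg (volterraTerm_nonneg hZ hb t k _), integral_volterraTerm hZ
    hb.eq_zero_of_lt]

lemma integral_abs_volterraTerm_sub_le (hZ : ARCHInnovations μ Z) (ha : ∀ j, p < j → a j = 0)
    (hb : ∀ j, p < j → b j = 0) (t : ℤ) (k : ℕ) :
    ∫ ω, |volterraTerm a Z t k ω - volterraTerm b Z t k ω| ∂μ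
      ≤ ∑ g ∈ Fintype.piFinset (fun _ : Fin k => lagSet p),
          |volterraCoeff a g - volterraCoeff b g| := by
  have hint (g : Fin k → ℕ+) := (integrable_volterraMonomial (μ := μ) hZ t g).const_mul
    |volterraCoeff a g - volterraCoeff b g|
  calc ∫ ω, |volterraTerm a Z t k ω - volterraTerm b Z t k ω| ∂μ
      ≤ ∫ ω, ∑ g ∈ Fintype.piFinset (fun _ : Fin k => lagSet p),
          |volterraCoeff a g - volterraCoeff b g| * volterraMonomial Z t g ω ∂μ := by
        refine integral_mono_of_nonneg (ae_of_all _ fun ω => abs_nonneg _)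
          (integrable_finsetSum _ fun g _ => hint g) (ae_of_all _ fun ω => ?_)
        simp only [volterraTerm_eq_sum ha, volterraTerm_eq_sum hb, ← sum_sub_distrib]
        refine (abs_sum_le_sum_abs _ _).trans_eq (sum_congr rfl fun g _ => ?_)
        rw [← sub_mul, abs_mul, abs_of_nonneg (volterraMonomial_nonneg hZ t g ω)]
    _ = _ := by
        rw [integral_finsetSum _ fun g _ => hint g]
        simp only [integral_const_mul, integral_volterraMonomial hZ, mul_one]

end Volterra

section Coefficients

variable {p : ℕ} {ε d M : ℝ} {a b : ℕ → ℝ}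

lemma mul_sum_abs_volterraCoeff_sub_le (ha : ARCHCoeffs p ε a) (hb : ARCHCoeffs p ε b)
    (hd : ∀ j ≤ p, |a j - b j| ≤ d) (hM : b 0 ≤ M) (k : ℕ) :
    ε * ∑ g ∈ Fintype.piFinset (fun _ : Fin k => lagSet p),
        |volterraCoeff a g - volterraCoeff b g|
      ≤ (ε + M * k * p) * d * ε ^ k := by
  set G := Fintype.piFinset (fun _ : Fin k => lagSet p)
  have hsa : ∑ x ∈ lagSet p, a x ≤ ε := by rw [sum_lagSet]; exact ha.sum_le
  have hsb : ∑ x ∈ lagSet p, b x ≤ ε := by rw [sum_lagSet]; exact hb.sum_le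
  have hε : 0 ≤ ε := (sum_nonneg fun x _ => ha.nonneg _).trans hsa
  have hd0 : 0 ≤ d := (abs_nonneg _).trans (hd 0 (Nat.zero_le p))
  have hlag : ∑ x ∈ lagSet p, |b x - a x| ≤ p * d :=
    calc ∑ x ∈ lagSet p, |b x - a x| ≤ ∑ x ∈ lagSet p, d :=
          sum_le_sum fun x hx => abs_sub_comm (b x) (a x) ▸ hd _ (mem_lagSet.mp hx)
      _ = (lagSet p).card * d := by rw [sum_const, nsmul_eq_mul]
      _ ≤ p * d := by gcongr; exact card_image_le.trans (card_range p).le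
  have htel := mul_sum_piFinset_abs_prod_sub_prod_le (lagSet p) (f := fun x => b x)
    (g := fun x => a x) (fun x _ => hb.nonneg _) (fun x _ => ha.nonneg _) hsb hsa k
  have hprod : ∑ g ∈ G, ∏ i, a (g i) ≤ ε ^ k := by
    rw [← sum_pow' (lagSet p) fun x => a x]
    exact pow_le_pow_left₀ (sum_nonneg fun x _ => ha.nonneg _) hsa k
  calc ε * ∑ g ∈ G, |volterraCoeff a g - volterraCoeff b g|
      ≤ ε * ∑ g ∈ G, (b 0 * |∏ i, b (g i) - ∏ i, a (g i)| + |b 0 - a 0| * ∏ i, a (g i)) := by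
        gcongr with g
        rw [volterraCoeff, volterraCoeff, abs_sub_comm]
        exact abs_mul_sub_mul_le (hb.nonneg 0) (prod_nonneg fun i _ => ha.nonneg _)
    _ = b 0 * (ε * ∑ g ∈ G, |∏ i, b (g i) - ∏ i, a (g i)|)
          + |b 0 - a 0| * (ε * ∑ g ∈ G, ∏ i, a (g i)) := by
        rw [sum_add_distrib, ← mul_sum, ← mul_sum]; ring
    _ ≤ M * (k * (p * d) * ε ^ k) + d * (ε * ε ^ k) := by
        have hM0 : 0 ≤ M := (hb.nonneg 0).trans hM
        have hdiff0 : |b 0 - a 0| ≤ d := abs_sub_comm (b 0) (a 0) ▸ hd 0 (Nat.zero_le p)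
        have htel' : ε * ∑ g ∈ G, |∏ i, b (g i) - ∏ i, a (g i)| ≤ k * (p * d) * ε ^ k :=
          htel.trans (by gcongr)
        gcongr ?_ * ?_ + ?_ * ?_
        · exact mul_nonneg hε (sum_nonneg fun g _ => prod_nonneg fun i _ => ha.nonneg _)
        · gcongr
    _ = (ε + M * k * p) * d * ε ^ k := by ring

lemma sum_abs_volterraCoeff_sub_le (hε : 0 < ε) (hε1 : ε ≤ 1) (ha : ARCHCoeffs p ε a)
    (hb : ARCHCoeffs p ε b) (hd : ∀ j ≤ p, |a j - b j| ≤ d) (hM : b 0 ≤ M) (k : ℕ) :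
    ∑ g ∈ Fintype.piFinset (fun _ : Fin k => lagSet p), |volterraCoeff a g - volterraCoeff b g|
      ≤ (1 + M * p) / ε ^ 2 * d * ((k + 1) ^ 2 * ε ^ (k + 1)) := by
  have hM0 : 0 ≤ M := (hb.nonneg 0).trans hM
  have hd0 : 0 ≤ d := (abs_nonneg _).trans (hd 0 (Nat.zero_le p))
  have hcoef : ε + M * k * p ≤ (1 + M * p) * (k + 1) ^ 2 := by
    have hk : (k : ℝ) ≤ (k + 1) ^ 2 := by nlinarith
    have hMp : 0 ≤ M * p := by positivity
    nlinarith
  rw [show (1 + M * p) / ε ^ 2 * d * ((k + 1) ^ 2 * ε ^ (k + 1))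
      = (1 + M * p) * (k + 1) ^ 2 * d * ε ^ (k + 1) / ε ^ 2 by ring, le_div_iff₀ (by positivity)]
  calc (∑ g ∈ Fintype.piFinset (fun _ : Fin k => lagSet p),
          |volterraCoeff a g - volterraCoeff b g|) * ε ^ 2
      = ε * (ε * ∑ g ∈ Fintype.piFinset (fun _ : Fin k => lagSet p),
          |volterraCoeff a g - volterraCoeff b g|) := by ring
    _ ≤ ε * ((ε + M * k * p) * d * ε ^ k) := by
        gcongr ε * ?_; exact mul_sum_abs_volterraCoeff_sub_le ha hb hd hM k
    _ = (ε + M * k * p) * d * ε ^ (k + 1) := by ring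
    _ ≤ (1 + M * p) * (k + 1) ^ 2 * d * ε ^ (k + 1) := by gcongr

end Coefficients

theorem stmt_12_general (δ : ℝ) (hδ : δ ∈ Set.Ioo (0:ℝ) 1) (p : ℕ)
    (M : ℝ) (hM : 0 < M) :
    ∃ C > (0:ℝ), ∀ (Ω : Type) (m0 : MeasurableSpace Ω) (μ : Measure Ω),
      IsProbabilityMeasure μ →
      ∀ (Z : ℤ → Ω → ℝ), (∀ t, Measurable (Z t)) →
        (∀ t ω, 0 ≤ Z t ω) → (∀ t, Integrable (Z t) μ) →
        (∀ t, ∫ ω, Z t ω ∂μ = 1) →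
        iIndepFun Z μ →
        (∀ t, IdentDistrib (Z t) (Z 0) μ μ) →
      ∀ (a abar : ℕ → ℝ),
        (0 < a 0) → (∀ j, 1 ≤ j → 0 ≤ a j) → (∀ j, p < j → a j = 0) →
        (∑ j ∈ Icc 1 p, a j) ≤ 1 - δ → a 0 ≤ M →
        (0 < abar 0) → (∀ j, 1 ≤ j → 0 ≤ abar j) → (∀ j, p < j → abar j = 0) →
        (∑ j ∈ Icc 1 p, abar j) ≤ 1 - δ → abar 0 ≤ M →
      ∀ t : ℤ,
        ∫ ω, |volterra a Z t ω - volterra abar Z t ω| ∂μ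
          ≤ C * Real.sqrt (∑ j ∈ range (p + 1), (abar j - a j) ^ 2)
              * ∑' k : ℕ, ((k : ℝ) + 1) ^ 2 * (1 - δ) ^ (k + 1) := by
  obtain ⟨hδ0, hδ1⟩ := hδ
  have hε : 0 < 1 - δ := by linarith
  have hε1 : 1 - δ < 1 := by linarith
  refine ⟨(1 + M * p) / (1 - δ) ^ 2, by positivity, ?_⟩
  intro Ω _ μ _ Z hZm hZ0 _ hZ1 hZi _ a abar ha0 ha ha_zero ha_sum _ hb0 hb hb_zero hb_sum hbM t
  have hZ : ARCHInnovations μ Z := ⟨hZm, hZ0, hZ1, hZi⟩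
  have nonneg_of_pos {c : ℕ → ℝ} (h0 : 0 < c 0) (h : ∀ j, 1 ≤ j → 0 ≤ c j) (j : ℕ) : 0 ≤ c j := by
    rcases j with _ | j
    exacts [h0.le, h _ j.succ_pos]
  have haC : ARCHCoeffs p (1 - δ) a := ⟨nonneg_of_pos ha0 ha, ha_zero, ha_sum⟩
  have hbC : ARCHCoeffs p (1 - δ) abar := ⟨nonneg_of_pos hb0 hb, hb_zero, hb_sum⟩
  have hd (j : ℕ) (hj : j ≤ p) :
      |a j - abar j| ≤ Real.sqrt (∑ j ∈ range (p + 1), (abar j - a j) ^ 2) := by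
    rw [abs_sub_comm]
    exact Real.abs_le_sqrt (single_le_sum (f := fun j => (abar j - a j) ^ 2)
      (fun _ _ => sq_nonneg _) (mem_range.mpr (Nat.lt_succ_of_le hj)))
  have hterm (k : ℕ) := (integral_abs_volterraTerm_sub_le hZ ha_zero hb_zero t k).trans
    (sum_abs_volterraCoeff_sub_le hε hε1.le haC hbC hd hbM k)
  have hsum := (summable_succ_sq_mul_pow_succ hε.le hε1).mul_left
    ((1 + M * p) / (1 - δ) ^ 2 * Real.sqrt (∑ j ∈ range (p + 1), (abar j - a j) ^ 2))
  calc ∫ ω, |volterra a Z t ω - volterra abar Z t ω| ∂μ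
      ≤ ∑' k, ∫ ω, |volterraTerm a Z t k ω - volterraTerm abar Z t k ω| ∂μ :=
        integral_abs_tsum_sub_tsum_le (integrable_volterraTerm hZ ha_zero t)
          (integrable_volterraTerm hZ hb_zero t) (summable_integral_abs_volterraTerm hZ haC hε1 t)
          (summable_integral_abs_volterraTerm hZ hbC hε1 t)
    _ ≤ _ := (hsum.of_nonneg_of_le (fun k => integral_nonneg fun ω => abs_nonneg _)
          hterm).tsum_le_tsum hterm hsum
    _ = _ := tsum_mul_left

/-- Parameter-stability of the stationary ARCH(p) solution: for two
admissible coefficient vectors `a, ā` (with intercepts bounded by `M`) and the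
same i.i.d. innovations, `E|X_t² − X̄_t²| ≤ C |ā − a| Σ_{k≥1} k² (1−δ)^k`,
where `C` depends only on `p`, `δ` and `M`. -/
theorem stmt_12 (δ : ℝ) (hδ : δ ∈ Set.Ioo (0:ℝ) 1) (p : ℕ) (hp : 1 ≤ p)
    (M : ℝ) (hM : 0 < M) :
    ∃ C > (0:ℝ), ∀ (Ω : Type) (m0 : MeasurableSpace Ω) (μ : Measure Ω),
      IsProbabilityMeasure μ →
      ∀ (Z : ℤ → Ω → ℝ), (∀ t, Measurable (Z t)) →
        (∀ t ω, 0 ≤ Z t ω) → (∀ t, Integrable (Z t) μ) →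
        (∀ t, ∫ ω, Z t ω ∂μ = 1) →
        iIndepFun Z μ →
        (∀ t, IdentDistrib (Z t) (Z 0) μ μ) →
      ∀ (a abar : ℕ → ℝ),
        (0 < a 0) → (∀ j, 1 ≤ j → 0 ≤ a j) → (∀ j, p < j → a j = 0) →
        (∑ j ∈ Icc 1 p, a j) ≤ 1 - δ → a 0 ≤ M →
        (0 < abar 0) → (∀ j, 1 ≤ j → 0 ≤ abar j) → (∀ j, p < j → abar j = 0) →
        (∑ j ∈ Icc 1 p, abar j) ≤ 1 - δ → abar 0 ≤ M →
      ∀ t : ℤ,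
        ∫ ω, |volterra a Z t ω - volterra abar Z t ω| ∂μ
          ≤ C * Real.sqrt (∑ j ∈ range (p + 1), (abar j - a j) ^ 2)
              * ∑' k : ℕ, ((k : ℝ) + 1) ^ 2 * (1 - δ) ^ (k + 1) :=
  stmt_12_general δ hδ p M hM
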